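/- For any lists p and y* over a type α with decidable equality, if k < |y*| and D(p, y*_{<k}) = m(p, y*), then the token a = y*[k] (the (k+1)-st element of y*) is an optimal extension of p: the minimum of D(p ++ (a :: s), y*) over all lists s equals m(p, y*), where m(p, y*) = min over 0 ≤ j ≤ |y*| of D(p, y*_{<j}). -/

import Mathlib

/-- Unit-cost Levenshtein recursion (replaces Mathlib's removed `levenshtein Levenshtein.defaultCost`). -/
def unitLevenshtein {α : Type*} [DecidableEq α] : List α → List α → ℕ
  | [], ys => ys.length
  | _ :: xs, [] => 1 + unitLevenshtein xs []
  | x :: xs, y :: ys =>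
    min (1 + unitLevenshtein xs (y :: ys))
      (min (1 + unitLevenshtein (x :: xs) ys) ((if x = y then 0 else 1) + unitLevenshtein xs ys))

/-- Unit-cost Levenshtein edit distance between two lists. -/
def editDist {α : Type*} [DecidableEq α] (u v : List α) : ℕ :=
  unitLevenshtein u v

/-- `rowMin p y = min over 0 ≤ j ≤ |y|` of the edit distance between `p` and `y.take j`. -/
def rowMin {α : Type*} [DecidableEq α] (p y : List α) : ℕ :=
  (Finset.range (y.length + 1)).inf' (by simp) (fun j => editDist p (y.take j))

/-!
Extending `p` by the remainder `y*.drop k` of the optimal prefix costs nothing, because appending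
a common suffix never increases the edit distance; this gives `≤`. Conversely, an alignment of
`p ++ w` with `y*` restricts to an alignment of `p` with some prefix of `y*`, so no extension can
beat `rowMin p y*`.
-/

section

variable {α : Type*} [DecidableEq α]

@[simp]
lemma editDist_nil_left (v : List α) : editDist [] v = v.length := by
  simp [editDist, unitLevenshtein]

@[simp]
lemma editDist_nil_right (u : List α) : editDist u [] = u.length := by
  induction u with
  | nil => simp
  | cons x u ih =>
    simp only [editDist, unitLevenshtein] at ih ⊢
    rw [ih, List.length_cons, Nat.add_comm]

lemma editDist_cons_cons (x y : α) (u v : List α) :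
    editDist (x :: u) (y :: v) =
      min (1 + editDist u (y :: v))
        (min (1 + editDist (x :: u) v) ((if x = y then 0 else 1) + editDist u v)) := by
  simp [editDist, unitLevenshtein]

lemma editDist_cons_left_le (x : α) (u v : List α) :
    editDist (x :: u) v ≤ 1 + editDist u v := by
  cases v with
  | nil => simp [Nat.add_comm]
  | cons y v => rw [editDist_cons_cons]; exact min_le_left _ _

lemma editDist_cons_right_le (u : List α) (y : α) (v : List α) :
    editDist u (y :: v) ≤ 1 + editDist u v := by
  cases u with
  | nil => simp [Nat.add_comm]
  | cons x u => rw [editDist_cons_cons]; exact (min_le_right _ _).trans (min_le_left _ _)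

lemma editDist_cons_cons_le (x y : α) (u v : List α) :
    editDist (x :: u) (y :: v) ≤ (if x = y then 0 else 1) + editDist u v := by
  rw [editDist_cons_cons]; exact (min_le_right _ _).trans (min_le_right _ _)

@[simp]
lemma editDist_self (u : List α) : editDist u u = 0 := by
  induction u with
  | nil => simp
  | cons x u ih => simpa [ih] using editDist_cons_cons_le x x u u

lemma editDist_append_right_le (t u v : List α) :
    editDist (u ++ t) (v ++ t) ≤ editDist u v := by
  induction u generalizing v with
  | nil =>
    induction v with
    | nil => simp
    | cons y v ih =>
      calc editDist ([] ++ t) (y :: v ++ t) ≤ 1 + editDist ([] ++ t) (v ++ t) :=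
            editDist_cons_right_le _ _ _
        _ ≤ 1 + v.length := by simpa using ih
        _ = editDist [] (y :: v) := by simp [Nat.add_comm]
  | cons x u ihu =>
    induction v with
    | nil =>
      calc editDist (x :: u ++ t) ([] ++ t) ≤ 1 + editDist (u ++ t) ([] ++ t) :=
            editDist_cons_left_le _ _ _
        _ ≤ 1 + u.length := by simpa using ihu []
        _ = editDist (x :: u) [] := by simp [Nat.add_comm]
    | cons y v ihv =>
      rw [editDist_cons_cons]
      refine le_min ?_ (le_min ?_ ?_)
      · exact (editDist_cons_left_le _ _ _).trans (Nat.add_le_add_left (ihu _) 1)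
      · exact (editDist_cons_right_le _ _ _).trans (Nat.add_le_add_left ihv 1)
      · exact (editDist_cons_cons_le _ _ _ _).trans (Nat.add_le_add_left (ihu v) _)

lemma rowMin_le_editDist_take {u v : List α} {j : ℕ} (hj : j ≤ v.length) :
    rowMin u v ≤ editDist u (v.take j) :=
  Finset.inf'_le _ (Finset.mem_range_succ_iff.mpr hj)

lemma exists_rowMin_eq (u v : List α) :
    ∃ j ≤ v.length, rowMin u v = editDist u (v.take j) := by
  obtain ⟨j, hj, hmin⟩ := Finset.exists_mem_eq_inf' (s := Finset.range (v.length + 1))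
    (by simp) (fun j => editDist u (v.take j))
  exact ⟨j, Finset.mem_range_succ_iff.mp hj, hmin⟩

lemma rowMin_cons_left_le (x : α) (u v : List α) :
    rowMin (x :: u) v ≤ 1 + rowMin u v := by
  obtain ⟨j, hj, hmin⟩ := exists_rowMin_eq u v
  rw [hmin]
  exact (rowMin_le_editDist_take hj).trans (editDist_cons_left_le _ _ _)

lemma rowMin_cons_right_le (u : List α) (y : α) (v : List α) :
    rowMin u (y :: v) ≤ 1 + rowMin u v := by
  obtain ⟨j, hj, hmin⟩ := exists_rowMin_eq u v
  rw [hmin]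
  calc rowMin u (y :: v) ≤ editDist u ((y :: v).take (j + 1)) :=
        rowMin_le_editDist_take (by simpa using hj)
    _ ≤ 1 + editDist u (v.take j) := editDist_cons_right_le _ _ _

lemma rowMin_cons_cons_le (x y : α) (u v : List α) :
    rowMin (x :: u) (y :: v) ≤ (if x = y then 0 else 1) + rowMin u v := by
  obtain ⟨j, hj, hmin⟩ := exists_rowMin_eq u v
  rw [hmin]
  calc rowMin (x :: u) (y :: v) ≤ editDist (x :: u) ((y :: v).take (j + 1)) :=
        rowMin_le_editDist_take (by simpa using hj)
    _ ≤ (if x = y then 0 else 1) + editDist u (v.take j) := editDist_cons_cons_le _ _ _ _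

lemma rowMin_le_editDist_append (w u v : List α) :
    rowMin u v ≤ editDist (u ++ w) v := by
  induction u generalizing v with
  | nil => exact (rowMin_le_editDist_take (Nat.zero_le v.length)).trans (by simp)
  | cons x u ihu =>
    induction v with
    | nil =>
      calc rowMin (x :: u) [] ≤ editDist (x :: u) [] := rowMin_le_editDist_take le_rfl
        _ ≤ editDist (x :: u ++ w) [] := by simp
    | cons y v ihv =>
      rw [List.cons_append, editDist_cons_cons]
      refine le_min ?_ (le_min ?_ ?_)
      · exact (rowMin_cons_left_le _ _ _).trans (Nat.add_le_add_left (ihu _) 1)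
      · exact (rowMin_cons_right_le _ _ _).trans (Nat.add_le_add_left ihv 1)
      · exact (rowMin_cons_cons_le _ _ _ _).trans (Nat.add_le_add_left (ihu v) _)

end

theorem optimal_extension_of_min_prefix {α : Type*} [DecidableEq α]
    (p ystar : List α) (k : ℕ) (hk : k < ystar.length)
    (h : editDist p (ystar.take k) = rowMin p ystar) :
    sInf {d | ∃ s : List α, d = editDist (p ++ ystar[k] :: s) ystar}
      = rowMin p ystar := by
  have hrest : editDist (p ++ ystar.drop k) ystar ∈
      {d | ∃ s : List α, d = editDist (p ++ ystar[k] :: s) ystar} :=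
    ⟨ystar.drop (k + 1), by rw [List.drop_eq_getElem_cons hk]⟩
  apply le_antisymm
  · calc sInf _ ≤ editDist (p ++ ystar.drop k) ystar := Nat.sInf_le hrest
      _ ≤ editDist p (ystar.take k) := by
        simpa using editDist_append_right_le (ystar.drop k) p (ystar.take k)
      _ = rowMin p ystar := h
  · refine le_csInf ⟨_, hrest⟩ ?_
    rintro d ⟨s, rfl⟩
    exact rowMin_le_editDist_append _ p ystar
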